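/- arXiv:1409.4938 — 5 statements merged into one kernel-verified Lean document; each statement's English description precedes it below -/
import Mathlib

section
/- Every 6-partite intersecting hypergraph G with 7 edges and maximum degree at most 3 has at least 2 vertices of degree 3. -/
def Intersecting {V : Type*} (E : Finset (Finset V)) : Prop :=
  ∀ e ∈ E, ∀ f ∈ E, ∃ v, v ∈ e ∧ v ∈ f

def IsCover {V : Type*} (E : Finset (Finset V)) (C : Finset V) : Prop :=
  ∀ e ∈ E, ∃ v ∈ C, v ∈ e

noncomputable def coverNum {V : Type*} (E : Finset (Finset V)) : ℕ :=
  sInf {n | ∃ C : Finset V, IsCover E C ∧ C.card = n}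

def Partite {V : Type*} (r : ℕ) (part : V → Fin r) (E : Finset (Finset V)) : Prop :=
  ∀ e ∈ E, ∀ i : Fin r, (e.filter (fun v => part v = i)).card = 1

open Classical in
noncomputable def deg {V : Type*} (E : Finset (Finset V)) (v : V) : ℕ :=
  (E.filter (fun e => v ∈ e)).card

open Finset in
lemma key_sum {V : Type*} [DecidableEq V] (B : Finset V) (d : V → ℕ)
    (hd : ∀ v ∈ B, d v ≤ 3) (h7 : ∑ v ∈ B, d v = 7)
    (ht : (B.filter (fun v => d v = 3)).card ≤ 1) :
    ∑ v ∈ B, (d v * d v - d v) ≤ 6 + 4 * (B.filter (fun v => d v = 3)).card := by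
  classical
  have hsplit : ∑ v ∈ B, (d v * d v - d v)
      = ∑ v ∈ B, ((if d v = 3 then 6 else 0) + (if d v = 2 then 2 else 0)) := by
    refine Finset.sum_congr rfl fun v hv => ?_
    have := hd v hv
    interval_cases (d v) <;> simp
  have h3 : ∑ v ∈ B, (if d v = 3 then 6 else 0) = 6 * (B.filter (fun v => d v = 3)).card := by
    rw [← Finset.sum_filter, Finset.sum_const, smul_eq_mul, mul_comm]
  have h2 : ∑ v ∈ B, (if d v = 2 then 2 else 0) = 2 * (B.filter (fun v => d v = 2)).card := by
    rw [← Finset.sum_filter, Finset.sum_const, smul_eq_mul, mul_comm]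
  rw [hsplit, Finset.sum_add_distrib, h3, h2]
  -- now bound cardinalities
  have hdisj : Disjoint (B.filter (fun v => d v = 3)) (B.filter (fun v => d v = 2)) := by
    rw [Finset.disjoint_left]
    intro a ha hb
    have h1 := (Finset.mem_filter.mp ha).2
    have h2 := (Finset.mem_filter.mp hb).2
    omega
  have hsub : (B.filter (fun v => d v = 3)) ∪ (B.filter (fun v => d v = 2)) ⊆ B :=
    Finset.union_subset (Finset.filter_subset _ _) (Finset.filter_subset _ _)
  have hle : ∑ v ∈ (B.filter (fun v => d v = 3)) ∪ (B.filter (fun v => d v = 2)), d v ≤ 7 := by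
    rw [← h7]
    exact Finset.sum_le_sum_of_subset hsub
  rw [Finset.sum_union hdisj] at hle
  have e3 : ∑ v ∈ B.filter (fun v => d v = 3), d v = 3 * (B.filter (fun v => d v = 3)).card := by
    rw [Finset.sum_congr rfl (fun v hv => (Finset.mem_filter.mp hv).2), Finset.sum_const,
      smul_eq_mul, mul_comm]
  have e2 : ∑ v ∈ B.filter (fun v => d v = 2), d v = 2 * (B.filter (fun v => d v = 2)).card := by
    rw [Finset.sum_congr rfl (fun v hv => (Finset.mem_filter.mp hv).2), Finset.sum_const,
      smul_eq_mul, mul_comm]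
  rw [e3, e2] at hle
  omega

theorem stmt2 {V : Type*} (part : V → Fin 6) (E : Finset (Finset V))
    (hp : Partite 6 part E) (hi : Intersecting E) (h7 : E.card = 7)
    (hΔ : ∀ v : V, deg E v ≤ 3) :
    ∃ u v : V, u ≠ v ∧ deg E u = 3 ∧ deg E v = 3 := by
  classical
  by_contra hcon
  push_neg at hcon
  have huniq : ∀ u v : V, deg E u = 3 → deg E v = 3 → u = v := by
    intro u v hu hv
    by_contra hne
    exact (hcon u v hne hu) hv
  -- V is nonempty
  have hEne : E.Nonempty := Finset.card_pos.mp (by omega)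
  obtain ⟨e0, he0⟩ := hEne
  have h1 := hp e0 he0 0
  obtain ⟨v0, _⟩ := Finset.card_pos.mp
    (by omega : 0 < (e0.filter (fun v => part v = (0 : Fin 6))).card)
  haveI : Nonempty V := ⟨v0⟩
  set d : V → ℕ := deg E with hd
  have hdeg : ∀ v, d v = (E.filter (fun e => v ∈ e)).card := by
    intro v
    simp [hd, deg]
  set B : Finset V := E.biUnion id with hB
  set Bi : Fin 6 → Finset V := fun i => B.filter (fun v => part v = i) with hBi
  -- choice function for common vertices
  let c : Fin 6 → Finset V × Finset V → V := fun i p =>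
    if h : ∃ v, v ∈ p.1 ∧ v ∈ p.2 ∧ part v = i then h.choose else Classical.arbitrary V
  set T : Finset (Finset V × Finset V) := E.offDiag with hT
  set Ti : Fin 6 → Finset (Finset V × Finset V) := fun i =>
    T.filter (fun p => ∃ v, v ∈ p.1 ∧ v ∈ p.2 ∧ part v = i) with hTi
  have hTcard : T.card = 42 := by rw [hT, Finset.offDiag_card, h7]
  have hTsub : T ⊆ Finset.univ.biUnion Ti := by
    intro p hpT
    have hp1 : p.1 ∈ E := (Finset.mem_offDiag.mp hpT).1
    have hp2 : p.2 ∈ E := (Finset.mem_offDiag.mp hpT).2.1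
    obtain ⟨v, hv1, hv2⟩ := hi p.1 hp1 p.2 hp2
    exact Finset.mem_biUnion.mpr ⟨part v, Finset.mem_univ _,
      Finset.mem_filter.mpr ⟨hpT, v, hv1, hv2, rfl⟩⟩
  have h42 : 42 ≤ ∑ i : Fin 6, (Ti i).card := by
    calc 42 = T.card := hTcard.symm
    _ ≤ (Finset.univ.biUnion Ti).card := Finset.card_le_card hTsub
    _ ≤ ∑ i : Fin 6, (Ti i).card := Finset.card_biUnion_le
  -- degrees within each part sum to 7
  have hsum7 : ∀ i, ∑ v ∈ Bi i, d v = 7 := by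
    intro i
    have step1 : ∑ v ∈ Bi i, d v = ∑ v ∈ Bi i, ∑ e ∈ E, (if v ∈ e then 1 else 0) := by
      refine Finset.sum_congr rfl fun v _ => ?_
      rw [hdeg v, Finset.card_filter]
    rw [step1, Finset.sum_comm]
    have step2 : ∀ e ∈ E, ∑ v ∈ Bi i, (if v ∈ e then 1 else 0) = 1 := by
      intro e he
      rw [← Finset.card_filter]
      have heq : (Bi i).filter (fun v => v ∈ e) = e.filter (fun v => part v = i) := by
        ext v
        simp only [hBi, hB, Finset.mem_filter, Finset.mem_biUnion, id]
        constructor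
        · rintro ⟨⟨_, hpart⟩, hve⟩
          exact ⟨hve, hpart⟩
        · rintro ⟨hve, hpart⟩
          exact ⟨⟨⟨e, he, hve⟩, hpart⟩, hve⟩
      rw [heq]
      exact hp e he i
    rw [Finset.sum_congr rfl step2, Finset.sum_const, smul_eq_mul, mul_one, h7]
  -- fiberwise bound on Ti
  have hTib : ∀ i, (Ti i).card ≤ ∑ v ∈ Bi i, (d v * d v - d v) := by
    intro i
    have hmaps : ∀ p ∈ Ti i, c i p ∈ Bi i := by
      intro p hpTi
      have hex := (Finset.mem_filter.mp hpTi).2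
      have hc : c i p = hex.choose := dif_pos hex
      obtain ⟨hcv1, hcv2, hcpart⟩ := hex.choose_spec
      have hp1 : p.1 ∈ E := (Finset.mem_offDiag.mp (Finset.mem_filter.mp hpTi).1).1
      rw [hc]
      exact Finset.mem_filter.mpr ⟨Finset.mem_biUnion.mpr ⟨p.1, hp1, hcv1⟩, hcpart⟩
    rw [Finset.card_eq_sum_card_fiberwise hmaps]
    refine Finset.sum_le_sum fun v _ => ?_
    have hsub : (Ti i).filter (fun p => c i p = v) ⊆ (E.filter (fun e => v ∈ e)).offDiag := by
      intro p hpf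
      obtain ⟨hpTi, hcp⟩ := Finset.mem_filter.mp hpf
      have hex := (Finset.mem_filter.mp hpTi).2
      have hc : c i p = hex.choose := dif_pos hex
      obtain ⟨hcv1, hcv2, _⟩ := hex.choose_spec
      have hod := Finset.mem_offDiag.mp (Finset.mem_filter.mp hpTi).1
      rw [hc] at hcp
      rw [Finset.mem_offDiag]
      refine ⟨Finset.mem_filter.mpr ⟨hod.1, ?_⟩, Finset.mem_filter.mpr ⟨hod.2.1, ?_⟩, hod.2.2⟩
      · rw [← hcp]; exact hcv1
      · rw [← hcp]; exact hcv2
    calc ((Ti i).filter (fun p => c i p = v)).card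
        ≤ ((E.filter (fun e => v ∈ e)).offDiag).card := Finset.card_le_card hsub
      _ = d v * d v - d v := by rw [Finset.offDiag_card, ← hdeg]
  -- at most one degree-3 vertex, summed over parts
  set S : Finset V := B.filter (fun v => d v = 3) with hS
  have hS1 : S.card ≤ 1 :=
    Finset.card_le_one.mpr (fun a ha b hb =>
      huniq a b (Finset.mem_filter.mp ha).2 (Finset.mem_filter.mp hb).2)
  have hSsum : ∑ i : Fin 6, ((Bi i).filter (fun v => d v = 3)).card = S.card := by
    rw [Finset.card_eq_sum_card_fiberwise (f := part) (t := Finset.univ)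
      (fun v _ => Finset.mem_univ _)]
    refine Finset.sum_congr rfl fun i _ => ?_
    congr 1
    ext v
    simp only [hBi, hS, Finset.mem_filter]
    tauto
  have hkey : ∀ i, (Ti i).card ≤ 6 + 4 * ((Bi i).filter (fun v => d v = 3)).card := by
    intro i
    refine le_trans (hTib i) (key_sum _ _ (fun v _ => hΔ v) (hsum7 i) ?_)
    calc ((Bi i).filter (fun v => d v = 3)).card
        ≤ ∑ j : Fin 6, ((Bi j).filter (fun v => d v = 3)).card :=
          Finset.single_le_sum (f := fun j => ((Bi j).filter (fun v => d v = 3)).card)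
            (fun j _ => Nat.zero_le _) (Finset.mem_univ i)
      _ = S.card := hSsum
      _ ≤ 1 := hS1
  have hfinal : ∑ i : Fin 6, (Ti i).card
      ≤ ∑ i : Fin 6, (6 + 4 * ((Bi i).filter (fun v => d v = 3)).card) :=
    Finset.sum_le_sum fun i _ => hkey i
  rw [Finset.sum_add_distrib, ← Finset.mul_sum, hSsum] at hfinal
  simp only [Finset.sum_const, Finset.card_univ, Fintype.card_fin, smul_eq_mul] at hfinal
  omega
end

section
/- If H' is a 6-partite intersecting hypergraph with 8 edges and covering number τ(H') = 4, then every edge of H' contains a vertex of degree 3. -/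
open Finset

section

variable {V : Type*}

lemma Intersecting.mono {E F : Finset (Finset V)} (hE : Intersecting E) (hFE : F ⊆ E) :
    Intersecting F :=
  fun e he f hf => hE e (hFE he) f (hFE hf)

lemma IsCover.insert_of_filter_notMem [DecidableEq V]
    {E : Finset (Finset V)} {C : Finset V} (v : V) (hC : IsCover {e ∈ E | v ∉ e} C) :
    IsCover E (insert v C) := by
  intro e he
  by_cases hv : v ∈ e
  · exact ⟨v, mem_insert_self v C, hv⟩
  · obtain ⟨w, hw, hwe⟩ := hC e (mem_filter.mpr ⟨he, hv⟩)
    exact ⟨w, mem_insert_of_mem hw, hwe⟩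

lemma coverNum_le_card {E : Finset (Finset V)} {C : Finset V} (hC : IsCover E C) :
    coverNum E ≤ C.card :=
  Nat.sInf_le ⟨C, hC, rfl⟩

lemma deg_eq_card_filter [DecidableEq V] (E : Finset (Finset V)) (v : V) :
    deg E v = #{e ∈ E | v ∈ e} := by
  unfold deg
  congr

lemma Partite.card_eq {r : ℕ} {part : V → Fin r} {E : Finset (Finset V)}
    (hp : Partite r part E) {e : Finset V} (he : e ∈ E) : e.card = r := by
  rw [card_eq_sum_card_fiberwise (t := univ) (f := part) fun _ _ => mem_univ _,
    sum_congr rfl fun i _ => hp e he i]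
  simp

lemma Intersecting.exists_isCover_card_le {F : Finset (Finset V)} (hF : Intersecting F)
    {k : ℕ} (hcard : F.card ≤ 2 * k) : ∃ C, IsCover F C ∧ C.card ≤ k := by
  classical
  induction k generalizing F with
  | zero => exact ⟨∅, fun e he => by simp_all, by simp⟩
  | succ k ih =>
    rcases F.eq_empty_or_nonempty with rfl | ⟨f, hf⟩
    · exact ⟨∅, fun e he => by simp at he, by simp⟩
    by_cases hg : ∃ g ∈ F, g ≠ f
    · obtain ⟨g, hg, hgf⟩ := hg
      obtain ⟨v, hvf, hvg⟩ := hF f hf g hg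
      have hsub : {e ∈ F | v ∉ e} ⊆ (F.erase f).erase g := fun e he => by
        simp only [mem_filter] at he
        exact mem_erase.mpr ⟨by rintro rfl; exact he.2 hvg,
          mem_erase.mpr ⟨by rintro rfl; exact he.2 hvf, he.1⟩⟩
      have hcard' := card_le_card hsub
      rw [card_erase_of_mem (mem_erase.mpr ⟨hgf, hg⟩), card_erase_of_mem hf] at hcard'
      obtain ⟨C, hC, hCk⟩ := ih (hF.mono (filter_subset (fun e => v ∉ e) F)) (by omega)
      exact ⟨insert v C, hC.insert_of_filter_notMem v, (card_insert_le v C).trans (by omega)⟩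
    · push Not at hg
      obtain ⟨v, hv, -⟩ := hF f hf f hf
      exact ⟨{v}, fun e he => ⟨v, mem_singleton_self v, hg e he ▸ hv⟩, by simp⟩

lemma Intersecting.coverNum_le_of_card_le_deg_add {E : Finset (Finset V)} (hE : Intersecting E)
    {v : V} {k : ℕ} (hcard : E.card ≤ deg E v + 2 * k) : coverNum E ≤ k + 1 := by
  classical
  have hsplit := card_filter_add_card_filter_not (s := E) (fun e => v ∈ e)
  rw [← deg_eq_card_filter] at hsplit
  obtain ⟨C, hC, hCk⟩ :=
    (hE.mono (filter_subset (fun e => v ∉ e) E)).exists_isCover_card_le (k := k) (by omega)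
  exact (coverNum_le_card (hC.insert_of_filter_notMem v)).trans
    ((card_insert_le v C).trans (by omega))

lemma Intersecting.card_add_card_sub_one_le_sum_card_inter [DecidableEq V]
    {E : Finset (Finset V)} (hE : Intersecting E) {e : Finset V} (he : e ∈ E) :
    e.card + (E.card - 1) ≤ ∑ f ∈ E, #(e ∩ f) := by
  have hmeet : ∀ f ∈ E.erase e, 1 ≤ #(e ∩ f) := fun f hf => by
    obtain ⟨v, hve, hvf⟩ := hE e he f (mem_of_mem_erase hf)
    exact card_pos.mpr ⟨v, mem_inter.mpr ⟨hve, hvf⟩⟩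
  calc e.card + (E.card - 1) = #(e ∩ e) + ∑ _f ∈ E.erase e, 1 := by
        simp [card_erase_of_mem he]
    _ ≤ #(e ∩ e) + ∑ f ∈ E.erase e, #(e ∩ f) := by gcongr with f hf; exact hmeet f hf
    _ = ∑ f ∈ E, #(e ∩ f) := add_sum_erase E (fun f => #(e ∩ f)) he

end

theorem stmt3 {V : Type*} (part : V → Fin 6) (E : Finset (Finset V))
    (hp : Partite 6 part E) (hi : Intersecting E) (h8 : E.card = 8)
    (hτ : coverNum E = 4) :
    ∀ e ∈ E, ∃ v ∈ e, deg E v = 3 := by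
  classical
  intro e he
  have hmaxdeg : ∀ v, deg E v ≤ 3 := fun v => by
    by_contra! h
    have := hi.coverNum_le_of_card_le_deg_add (v := v) (k := 2) (by omega)
    omega
  by_contra! hne
  have hdeg : ∀ v ∈ e, #{f ∈ E | v ∈ f} ≤ 2 := fun v hv => by
    have := hmaxdeg v
    have := hne v hv
    rw [deg_eq_card_filter] at *
    omega
  have hupper := sum_card_inter_le hdeg
  have hlower := hi.card_add_card_sub_one_le_sum_card_inter he
  rw [hp.card_eq he, h8] at *
  omega
end

section
/- If H' is a 6-partite intersecting hypergraph with 8 edges and τ(H') = 4, then there exist two edges of H' that share at least two vertices of degree 3. -/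
private lemma pair_cover {V : Type*} : ∀ (n : ℕ) (F : Finset (Finset V)),
    (∀ a ∈ F, ∀ b ∈ F, ∃ v, v ∈ a ∧ v ∈ b) → F.card ≤ 2 * n →
    ∃ C : Finset V, C.card ≤ n ∧ ∀ f ∈ F, ∃ w ∈ C, w ∈ f := by
  classical
  intro n
  induction n with
  | zero =>
    intro F _ hcard
    have hF : F = ∅ := Finset.card_eq_zero.mp (Nat.le_zero.mp hcard)
    exact ⟨∅, le_refl _, by simp [hF]⟩
  | succ n ih =>
    intro F hint hcard
    rcases F.eq_empty_or_nonempty with rfl | ⟨e1, he1⟩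
    · exact ⟨∅, by simp, by simp⟩
    rcases (F.erase e1).eq_empty_or_nonempty with hemp | ⟨e2, he2⟩
    · obtain ⟨w, hw, -⟩ := hint e1 he1 e1 he1
      refine ⟨{w}, by simp, ?_⟩
      intro f hf
      have hfe : f = e1 := by
        by_contra hne
        have : f ∈ F.erase e1 := Finset.mem_erase.mpr ⟨hne, hf⟩
        simp [hemp] at this
      exact ⟨w, by simp, hfe ▸ hw⟩
    · have he2F : e2 ∈ F := (Finset.mem_erase.mp he2).2
      obtain ⟨w, hw1, hw2⟩ := hint e1 he1 e2 he2F
      set F2 := (F.erase e1).erase e2 with hF2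
      have hsub : F2 ⊆ F :=
        subset_trans (Finset.erase_subset _ _) (Finset.erase_subset _ _)
      have hcard2 : F2.card ≤ 2 * n := by
        have h1 : (F.erase e1).card = F.card - 1 := Finset.card_erase_of_mem he1
        have h2 : F2.card = (F.erase e1).card - 1 := Finset.card_erase_of_mem he2
        omega
      obtain ⟨C, hC, hcov⟩ := ih F2 (fun a ha b hb => hint a (hsub ha) b (hsub hb)) hcard2
      refine ⟨insert w C, ?_, ?_⟩
      · have := Finset.card_insert_le w C; omega
      · intro f hf
        by_cases h1 : f = e1
        · exact ⟨w, Finset.mem_insert_self _ _, h1 ▸ hw1⟩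
        by_cases h2 : f = e2
        · exact ⟨w, Finset.mem_insert_self _ _, h2 ▸ hw2⟩
        · obtain ⟨x, hx, hxf⟩ := hcov f (by
            simp only [hF2, Finset.mem_erase]
            exact ⟨h2, h1, hf⟩)
          exact ⟨x, Finset.mem_insert_of_mem hx, hxf⟩

private lemma sum_count {α β : Type*} (S : Finset α) (T : Finset β) (R : α → β → Prop)
    [∀ a b, Decidable (R a b)] :
    ∑ a ∈ S, (T.filter (fun b => R a b)).card = ∑ b ∈ T, (S.filter (fun a => R a b)).card := by
  simp only [Finset.card_filter]
  exact Finset.sum_comm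

theorem stmt6 {V : Type*} (part : V → Fin 6) (E : Finset (Finset V))
    (hp : Partite 6 part E) (hi : Intersecting E) (h8 : E.card = 8)
    (hτ : coverNum E = 4) :
    ∃ e ∈ E, ∃ f ∈ E, e ≠ f ∧ ∃ u v : V, u ≠ v ∧
      u ∈ e ∧ u ∈ f ∧ v ∈ e ∧ v ∈ f ∧ deg E u = 3 ∧ deg E v = 3 := by
  classical
  by_contra hcon
  have hdeg : ∀ v : V, (E.filter (fun e => v ∈ e)).card = deg E v := by
    intro v; simp [deg]
  have hno : ∀ e ∈ E, ∀ f ∈ E, e ≠ f → ∀ u v : V, u ≠ v →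
      u ∈ e → u ∈ f → v ∈ e → v ∈ f → deg E u = 3 → deg E v = 3 → False := by
    intro e he f hf hef u v huv hue huf hve hvf hdu hdv
    exact hcon ⟨e, he, f, hf, hef, u, v, huv, hue, huf, hve, hvf, hdu, hdv⟩
  have hlb : ∀ C : Finset V, IsCover E C → 4 ≤ C.card := by
    intro C hC
    by_contra hlt
    push_neg at hlt
    have hmem : C.card ∈ {n | ∃ C' : Finset V, IsCover E C' ∧ C'.card = n} := ⟨C, hC, rfl⟩
    have h2 : coverNum E ≤ C.card := Nat.sInf_le hmem
    rw [hτ] at h2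
    omega
  -- all degrees ≤ 3
  have hdeg3 : ∀ v : V, deg E v ≤ 3 := by
    intro v
    by_contra hv
    push_neg at hv
    have hsplit := Finset.card_filter_add_card_filter_not
      (s := E) (p := fun e => v ∈ e)
    have hF'card : (E.filter (fun e => ¬ v ∈ e)).card ≤ 2 * 2 := by
      rw [hdeg v] at hsplit; omega
    obtain ⟨C', hC'card, hcov⟩ := pair_cover 2 (E.filter (fun e => ¬ v ∈ e))
      (fun a ha b hb => hi a (Finset.mem_of_mem_filter a ha) b (Finset.mem_of_mem_filter b hb))
      hF'card
    have hcover : IsCover E (insert v C') := by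
      intro e he
      by_cases hve : v ∈ e
      · exact ⟨v, Finset.mem_insert_self _ _, hve⟩
      · obtain ⟨w, hw, hwf⟩ := hcov e (Finset.mem_filter.mpr ⟨he, hve⟩)
        exact ⟨w, Finset.mem_insert_of_mem hw, hwf⟩
    have := hlb _ hcover
    have := Finset.card_insert_le v C'
    omega
  -- any two degree-3 vertices share an edge
  have hcommon : ∀ u v : V, deg E u = 3 → deg E v = 3 → ∃ e ∈ E, u ∈ e ∧ v ∈ e := by
    intro u v hdu hdv
    by_contra hnc
    push_neg at hnc
    have h5 : (E.filter (fun e => ¬ u ∈ e)).card = 5 := by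
      have hsplit := Finset.card_filter_add_card_filter_not
        (s := E) (p := fun e => u ∈ e)
      rw [hdeg u, hdu] at hsplit; omega
    have hBeq : (E.filter (fun e => ¬ u ∈ e)).filter (fun e => v ∈ e)
        = E.filter (fun e => v ∈ e) := by
      ext f
      simp only [Finset.mem_filter, and_assoc]
      constructor
      · rintro ⟨hf, -, hvf⟩; exact ⟨hf, hvf⟩
      · rintro ⟨hf, hvf⟩
        exact ⟨hf, fun huf => hnc f hf huf hvf, hvf⟩
    have hsplit2 := Finset.card_filter_add_card_filter_not
      (s := E.filter (fun e => ¬ u ∈ e)) (p := fun e => v ∈ e)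
    rw [hBeq, hdeg v, hdv, h5] at hsplit2
    have hF'eq : (E.filter (fun e => ¬ u ∈ e)).filter (fun e => ¬ v ∈ e)
        = E.filter (fun e => ¬ u ∈ e ∧ ¬ v ∈ e) := by
      rw [Finset.filter_filter]
    have hF'card : (E.filter (fun e => ¬ u ∈ e ∧ ¬ v ∈ e)).card ≤ 2 * 1 := by
      rw [← hF'eq]; omega
    obtain ⟨C', hC'card, hcov⟩ := pair_cover 1 (E.filter (fun e => ¬ u ∈ e ∧ ¬ v ∈ e))
      (fun a ha b hb => hi a (Finset.mem_of_mem_filter a ha) b (Finset.mem_of_mem_filter b hb))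
      hF'card
    have hcover : IsCover E (insert u (insert v C')) := by
      intro e he
      by_cases hue : u ∈ e
      · exact ⟨u, Finset.mem_insert_self _ _, hue⟩
      by_cases hve : v ∈ e
      · exact ⟨v, Finset.mem_insert_of_mem (Finset.mem_insert_self _ _), hve⟩
      · obtain ⟨w, hw, hwf⟩ := hcov e (Finset.mem_filter.mpr ⟨he, hue, hve⟩)
        exact ⟨w, Finset.mem_insert_of_mem (Finset.mem_insert_of_mem hw), hwf⟩
    have h4 := hlb _ hcover
    have c1 := Finset.card_insert_le u (insert v C')
    have c2 := Finset.card_insert_le v C'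
    omega
  set D3 := (E.biUnion id).filter (fun v => deg E v = 3) with hD3def
  have hD3 : ∀ w : V, w ∈ D3 ↔ deg E w = 3 := by
    intro w
    simp only [hD3def, Finset.mem_filter, Finset.mem_biUnion, id]
    constructor
    · rintro ⟨-, h⟩; exact h
    · intro h
      refine ⟨?_, h⟩
      have hne : (E.filter (fun e => w ∈ e)).Nonempty := by
        rw [← Finset.card_pos, hdeg w, h]; norm_num
      obtain ⟨e, he⟩ := hne
      exact ⟨e, (Finset.mem_filter.mp he).1, (Finset.mem_filter.mp he).2⟩
  have huniq : ∀ u v : V, u ≠ v → deg E u = 3 → deg E v = 3 →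
      ∀ e ∈ E, ∀ f ∈ E, u ∈ e → v ∈ e → u ∈ f → v ∈ f → e = f := by
    intro u v huv hdu hdv e he f hf hue hve huf hvf
    by_contra hef
    exact hno e he f hf hef u v huv hue huf hve hvf hdu hdv
  have hc1 : ∀ u v : V, u ≠ v → deg E u = 3 → deg E v = 3 →
      (E.filter (fun e => u ∈ e ∧ v ∈ e)).card = 1 := by
    intro u v huv hdu hdv
    obtain ⟨e0, he0, hu0, hv0⟩ := hcommon u v hdu hdv
    have heq : E.filter (fun e => u ∈ e ∧ v ∈ e) = {e0} := by
      ext f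
      simp only [Finset.mem_filter, Finset.mem_singleton]
      constructor
      · rintro ⟨hf, huf, hvf⟩
        exact huniq u v huv hdu hdv f hf e0 he0 huf hvf hu0 hv0
      · rintro rfl; exact ⟨he0, hu0, hv0⟩
    rw [heq, Finset.card_singleton]
  set N := D3.card with hNdef
  have hN6 : N ≤ 6 := by
    have h1 : ∀ w ∈ D3, part w ∈ (Finset.univ : Finset (Fin 6)) := fun _ _ => Finset.mem_univ _
    have h2 : Set.InjOn part D3 := by
      intro u hu v hv hpart
      by_contra hne
      obtain ⟨e, he, hue, hve⟩ := hcommon u v ((hD3 u).mp hu) ((hD3 v).mp hv)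
      have hcard := hp e he (part u)
      have hgt : 1 < (e.filter (fun w => part w = part u)).card := by
        refine Finset.one_lt_card.mpr ⟨u, ?_, v, ?_, hne⟩
        · exact Finset.mem_filter.mpr ⟨hue, rfl⟩
        · exact Finset.mem_filter.mpr ⟨hve, hpart.symm⟩
      omega
    have := Finset.card_le_card_of_injOn part h1 h2
    simpa using this
  -- t e = number of degree-3 vertices in e
  set t : Finset V → ℕ := fun e => (D3.filter (fun v => v ∈ e)).card with htdef
  -- each edge has exactly 6 vertices
  have hecard : ∀ e ∈ E, e.card = 6 := by
    intro e he
    have H : ∀ x ∈ e, part x ∈ (Finset.univ : Finset (Fin 6)) := fun _ _ => Finset.mem_univ _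
    rw [Finset.card_eq_sum_card_fiberwise H, Finset.sum_congr rfl (fun i _ => hp e he i)]
    simp
  -- every edge contains a degree-3 vertex
  have ht1 : ∀ e ∈ E, 1 ≤ t e := by
    intro e he
    have hswap := sum_count E e (fun f v => v ∈ f)
    have hlow : 13 ≤ ∑ f ∈ E, (e.filter (fun v => v ∈ f)).card := by
      rw [← Finset.add_sum_erase E _ he]
      have h1 : (e.filter (fun v => v ∈ e)).card = 6 := by
        rw [Finset.filter_true_of_mem (fun x hx => hx)]
        exact hecard e he
      have h2 : 7 ≤ ∑ f ∈ E.erase e, (e.filter (fun v => v ∈ f)).card := by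
        have hone : ∀ f ∈ E.erase e, 1 ≤ (e.filter (fun v => v ∈ f)).card := by
          intro f hf
          obtain ⟨v, hv1, hv2⟩ := hi e he f (Finset.mem_of_mem_erase hf)
          exact Finset.card_pos.mpr ⟨v, Finset.mem_filter.mpr ⟨hv1, hv2⟩⟩
        have := Finset.card_nsmul_le_sum (E.erase e)
          (fun f => (e.filter (fun v => v ∈ f)).card) 1 hone
        rw [Finset.card_erase_of_mem he, h8] at this
        simpa using this
      omega
    have hhigh : ∑ v ∈ e, (E.filter (fun f => v ∈ f)).card ≤ 12 + t e := by
      have hb : ∀ v ∈ e, (E.filter (fun f => v ∈ f)).card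
          ≤ 2 + (if deg E v = 3 then 1 else 0) := by
        intro v _
        rw [hdeg v]
        have := hdeg3 v
        split <;> omega
      calc ∑ v ∈ e, (E.filter (fun f => v ∈ f)).card
          ≤ ∑ v ∈ e, (2 + if deg E v = 3 then 1 else 0) := Finset.sum_le_sum hb
        _ = ∑ v ∈ e, 2 + ∑ v ∈ e, (if deg E v = 3 then 1 else 0) := Finset.sum_add_distrib
        _ = 12 + t e := by
            rw [Finset.sum_const, hecard e he, ← Finset.card_filter]
            have heq : e.filter (fun v => deg E v = 3) = D3.filter (fun v => v ∈ e) := by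
              ext v
              simp only [Finset.mem_filter, hD3 v]
              tauto
            rw [heq]
            simp [htdef]
    omega
  -- every edge contains at most 3 degree-3 vertices
  have ht3 : ∀ e ∈ E, t e ≤ 3 := by
    intro e he
    set A := D3.filter (fun v => v ∈ e) with hA
    have hdisj : ∀ u ∈ A, ∀ v ∈ A, u ≠ v →
        Disjoint ((E.erase e).filter (fun f => u ∈ f)) ((E.erase e).filter (fun f => v ∈ f)) := by
      intro u hu v hv huv
      rw [Finset.disjoint_left]
      intro f hfu hfv
      simp only [Finset.mem_filter, Finset.mem_erase] at hfu hfv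
      obtain ⟨huD3, hue⟩ := Finset.mem_filter.mp hu
      obtain ⟨hvD3, hve⟩ := Finset.mem_filter.mp hv
      exact hfu.1.1 (huniq u v huv ((hD3 u).mp huD3) ((hD3 v).mp hvD3) e he f hfu.1.2
        hue hve hfu.2 hfv.2).symm
    have hbi := Finset.card_biUnion hdisj
    have hsub : (A.biUnion (fun u => (E.erase e).filter (fun f => u ∈ f))) ⊆ E.erase e :=
      Finset.biUnion_subset.mpr (fun u _ => Finset.filter_subset _ _)
    have h7 : (E.erase e).card = 7 := by rw [Finset.card_erase_of_mem he, h8]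
    have heach : ∀ u ∈ A, ((E.erase e).filter (fun f => u ∈ f)).card = 2 := by
      intro u hu
      obtain ⟨huD3, hue⟩ := Finset.mem_filter.mp hu
      rw [Finset.filter_erase, Finset.card_erase_of_mem (Finset.mem_filter.mpr ⟨he, hue⟩), hdeg u,
        (hD3 u).mp huD3]
    have hsum : ∑ u ∈ A, ((E.erase e).filter (fun f => u ∈ f)).card = 2 * A.card := by
      rw [Finset.sum_congr rfl heach, Finset.sum_const, smul_eq_mul, mul_comm]
    have hle := Finset.card_le_card hsub
    have : t e = A.card := by simp [htdef, hA]
    omega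
  -- Σ t = 3N
  have I1 : ∑ e ∈ E, t e = 3 * N := by
    have hs := sum_count E D3 (fun e v => v ∈ e)
    have : ∑ v ∈ D3, (E.filter (fun e => v ∈ e)).card = ∑ v ∈ D3, 3 :=
      Finset.sum_congr rfl (fun v hv => by rw [hdeg v, (hD3 v).mp hv])
    simp only [htdef]
    rw [hs, this, Finset.sum_const, smul_eq_mul, mul_comm]
  -- Σ t² = N(3 + (N-1))
  have I2 : ∑ e ∈ E, t e * t e = N * (3 + (N - 1)) := by
    have hprod : ∀ e : Finset V,
        t e * t e = ((D3 ×ˢ D3).filter (fun p => p.1 ∈ e ∧ p.2 ∈ e)).card := by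
      intro e
      have heq : (D3 ×ˢ D3).filter (fun p => p.1 ∈ e ∧ p.2 ∈ e)
          = (D3.filter (fun v => v ∈ e)) ×ˢ (D3.filter (fun v => v ∈ e)) := by
        ext ⟨u, v⟩
        simp only [Finset.mem_filter, Finset.mem_product]
        tauto
      rw [heq, Finset.card_product]
    have step : ∑ e ∈ E, t e * t e
        = ∑ p ∈ D3 ×ˢ D3, (E.filter (fun e => p.1 ∈ e ∧ p.2 ∈ e)).card := by
      simp_rw [hprod]
      exact sum_count E (D3 ×ˢ D3) (fun e p => p.1 ∈ e ∧ p.2 ∈ e)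
    have step2 : ∑ p ∈ D3 ×ˢ D3, (E.filter (fun e => p.1 ∈ e ∧ p.2 ∈ e)).card
        = ∑ u ∈ D3, ∑ v ∈ D3, (E.filter (fun e => u ∈ e ∧ v ∈ e)).card :=
      Finset.sum_product _ _ _
    have inner : ∀ u ∈ D3,
        ∑ v ∈ D3, (E.filter (fun e => u ∈ e ∧ v ∈ e)).card = 3 + (N - 1) := by
      intro u hu
      rw [← Finset.add_sum_erase D3 _ hu]
      congr 1
      · have heq : E.filter (fun e => u ∈ e ∧ u ∈ e) = E.filter (fun e => u ∈ e) := by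
          simp
        rw [heq, hdeg u, (hD3 u).mp hu]
      · have hval : ∀ v ∈ D3.erase u, (E.filter (fun e => u ∈ e ∧ v ∈ e)).card = 1 := by
          intro v hv
          obtain ⟨hvu, hvD3⟩ := Finset.mem_erase.mp hv
          exact hc1 u v (Ne.symm hvu) ((hD3 u).mp hu) ((hD3 v).mp hvD3)
        rw [Finset.sum_congr rfl hval, Finset.sum_const, Finset.card_erase_of_mem hu,
          smul_eq_mul, mul_one]
    rw [step, step2, Finset.sum_congr rfl inner, Finset.sum_const, smul_eq_mul]
  -- the set of "core" edges with three degree-3 vertices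
  set M := E.filter (fun e => t e = 3) with hMdef
  set j := M.card with hjdef
  have hj8 : j ≤ 8 := by
    rw [hjdef, hMdef, ← h8]
    exact Finset.card_filter_le _ _
  have Eq1 : N * (3 + (N - 1)) + 16 = 9 * N + 2 * j := by
    have hper : ∑ e ∈ E, (t e * t e + 2)
        = ∑ e ∈ E, (3 * t e + 2 * (if t e = 3 then 1 else 0)) := by
      refine Finset.sum_congr rfl (fun e he => ?_)
      have h1 := ht1 e he
      have h3 := ht3 e he
      have hcases : t e = 1 ∨ t e = 2 ∨ t e = 3 := by omega
      rcases hcases with h | h | h <;> rw [h] <;> norm_num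
    have lhs : ∑ e ∈ E, (t e * t e + 2) = N * (3 + (N - 1)) + 16 := by
      rw [Finset.sum_add_distrib, I2, Finset.sum_const, h8, smul_eq_mul]
    have rhs : ∑ e ∈ E, (3 * t e + 2 * (if t e = 3 then 1 else 0)) = 9 * N + 2 * j := by
      rw [Finset.sum_add_distrib, ← Finset.mul_sum, I1, ← Finset.mul_sum,
        ← Finset.card_filter]
      rw [hjdef, hMdef]
      ring
    rw [← lhs, hper, rhs]
  -- g v = number of core edges through v
  set g : V → ℕ := fun v => (M.filter (fun e => v ∈ e)).card with hgdef
  have hMsubE : M ⊆ E := Finset.filter_subset _ _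
  have I4 : ∑ v ∈ D3, g v = 3 * j := by
    have hs := sum_count D3 M (fun v e => v ∈ e)
    have hval : ∀ e ∈ M, (D3.filter (fun v => v ∈ e)).card = 3 := by
      intro e he
      exact (Finset.mem_filter.mp he).2
    simp only [hgdef]
    rw [hs, Finset.sum_congr rfl hval, Finset.sum_const, smul_eq_mul, mul_comm]
  have I5 : ∑ v ∈ D3, g v * g v ≤ j * (3 + (j - 1)) := by
    have hprod : ∀ v : V,
        g v * g v = ((M ×ˢ M).filter (fun q => v ∈ q.1 ∧ v ∈ q.2)).card := by
      intro v
      have heq : (M ×ˢ M).filter (fun q => v ∈ q.1 ∧ v ∈ q.2)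
          = (M.filter (fun e => v ∈ e)) ×ˢ (M.filter (fun e => v ∈ e)) := by
        ext ⟨a, b⟩
        simp only [Finset.mem_filter, Finset.mem_product]
        tauto
      rw [heq, Finset.card_product]
    have step : ∑ v ∈ D3, g v * g v
        = ∑ q ∈ M ×ˢ M, (D3.filter (fun v => v ∈ q.1 ∧ v ∈ q.2)).card := by
      simp_rw [hprod]
      exact sum_count D3 (M ×ˢ M) (fun v q => v ∈ q.1 ∧ v ∈ q.2)
    have step2 : ∑ q ∈ M ×ˢ M, (D3.filter (fun v => v ∈ q.1 ∧ v ∈ q.2)).card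
        = ∑ e ∈ M, ∑ f ∈ M, (D3.filter (fun v => v ∈ e ∧ v ∈ f)).card :=
      Finset.sum_product _ _ _
    have inner : ∀ e ∈ M,
        ∑ f ∈ M, (D3.filter (fun v => v ∈ e ∧ v ∈ f)).card ≤ 3 + (j - 1) := by
      intro e he
      rw [← Finset.add_sum_erase M _ he]
      have hdiag : (D3.filter (fun v => v ∈ e ∧ v ∈ e)).card = 3 := by
        have heq : D3.filter (fun v => v ∈ e ∧ v ∈ e) = D3.filter (fun v => v ∈ e) := by
          simp
        rw [heq]
        exact (Finset.mem_filter.mp he).2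
      have hoff : ∀ f ∈ M.erase e, (D3.filter (fun v => v ∈ e ∧ v ∈ f)).card ≤ 1 := by
        intro f hf
        obtain ⟨hfe, hfM⟩ := Finset.mem_erase.mp hf
        refine Finset.card_le_one.mpr ?_
        intro a ha b hb
        by_contra hab
        obtain ⟨haD3, hae, haf⟩ := Finset.mem_filter.mp ha
        obtain ⟨hbD3, hbe, hbf⟩ := Finset.mem_filter.mp hb
        exact hno e (hMsubE he) f (hMsubE hfM) (Ne.symm hfe) a b hab hae haf hbe hbf
          ((hD3 a).mp haD3) ((hD3 b).mp hbD3)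
      have hsumoff : ∑ f ∈ M.erase e, (D3.filter (fun v => v ∈ e ∧ v ∈ f)).card ≤ j - 1 := by
        have := Finset.sum_le_card_nsmul (M.erase e)
          (fun f => (D3.filter (fun v => v ∈ e ∧ v ∈ f)).card) 1 hoff
        rw [Finset.card_erase_of_mem he] at this
        simpa using this
      omega
    calc ∑ v ∈ D3, g v * g v
        = ∑ e ∈ M, ∑ f ∈ M, (D3.filter (fun v => v ∈ e ∧ v ∈ f)).card := by
          rw [step, step2]
      _ ≤ ∑ e ∈ M, (3 + (j - 1)) := Finset.sum_le_sum inner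
      _ = j * (3 + (j - 1)) := by rw [Finset.sum_const, smul_eq_mul]
  -- quadratic inequalities
  have quad1 : ∀ n : ℕ, 3 * n ≤ n * n + 2 := by
    intro n
    rcases le_or_gt n 2 with h | h
    · interval_cases n <;> omega
    · have : 3 * n ≤ n * n := Nat.mul_le_mul_right n h
      omega
  have quad2 : ∀ n : ℕ, 5 * n ≤ n * n + 6 := by
    intro n
    rcases le_or_gt n 4 with h | h
    · interval_cases n <;> omega
    · have : 5 * n ≤ n * n := Nat.mul_le_mul_right n h
      omega
  have C1 : 9 * j ≤ j * (3 + (j - 1)) + 2 * N := by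
    have h1 : ∑ v ∈ D3, 3 * g v ≤ ∑ v ∈ D3, (g v * g v + 2) :=
      Finset.sum_le_sum (fun v _ => quad1 (g v))
    rw [Finset.sum_add_distrib, ← Finset.mul_sum, I4, Finset.sum_const, smul_eq_mul,
      mul_comm D3.card 2] at h1
    have h2 : 3 * (3 * j) = 9 * j := by ring
    rw [h2] at h1
    have := I5
    omega
  have C2 : 15 * j ≤ j * (3 + (j - 1)) + 6 * N := by
    have h1 : ∑ v ∈ D3, 5 * g v ≤ ∑ v ∈ D3, (g v * g v + 6) :=
      Finset.sum_le_sum (fun v _ => quad2 (g v))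
    rw [Finset.sum_add_distrib, ← Finset.mul_sum, I4, Finset.sum_const, smul_eq_mul,
      mul_comm D3.card 6] at h1
    have h2 : 5 * (3 * j) = 15 * j := by ring
    rw [h2] at h1
    have := I5
    omega
  -- endgame: pure arithmetic
  have final : ∀ N' j' : ℕ, N' ≤ 6 → j' ≤ 8 →
      N' * (3 + (N' - 1)) + 16 = 9 * N' + 2 * j' →
      9 * j' ≤ j' * (3 + (j' - 1)) + 2 * N' →
      15 * j' ≤ j' * (3 + (j' - 1)) + 6 * N' → False := by
    intro N' j' h1 h2 h3 h4 h5
    interval_cases N' <;> interval_cases j' <;> omega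
  exact final N j hN6 hj8 Eq1 C1 C2
end

section
/- There is no 6-partite intersecting hypergraph with 12 edges and covering number 5. Consequently f(6) ≠ 12, where f(r) is the minimum number of edges of an r-partite intersecting hypergraph with covering number r−1. -/
/-- From an intersecting family, any subfamily of at most `2k` edges can be
covered by at most `k` vertices (pair up edges and take common vertices). -/
lemma exCover {V : Type} {E : Finset (Finset V)} (hInt : Intersecting E) :
    ∀ (k : ℕ) (S : Finset (Finset V)), S ⊆ E → S.card ≤ 2 * k →
      ∃ W : Finset V, W.card ≤ k ∧ ∀ e ∈ S, ∃ v ∈ W, v ∈ e := by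
  classical
  intro k
  induction k with
  | zero =>
    intro S hS hc
    have hemp : S = ∅ := Finset.card_eq_zero.mp (by omega)
    exact ⟨∅, le_rfl, by simp [hemp]⟩
  | succ k ih =>
    intro S hS hc
    rcases S.eq_empty_or_nonempty with rfl | ⟨e, he⟩
    · exact ⟨∅, by simp, by simp⟩
    rcases (S.erase e).eq_empty_or_nonempty with h1 | ⟨f, hf⟩
    · obtain ⟨v, hv, -⟩ := hInt e (hS he) e (hS he)
      refine ⟨{v}, by simp, ?_⟩
      intro g hg
      have hge : g = e := by
        by_contra hne
        have : g ∈ S.erase e := Finset.mem_erase.mpr ⟨hne, hg⟩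
        simp [h1] at this
      exact ⟨v, by simp, hge ▸ hv⟩
    · have hfe : f ≠ e := (Finset.mem_erase.mp hf).1
      have hfS : f ∈ S := (Finset.mem_erase.mp hf).2
      obtain ⟨v, hv1, hv2⟩ := hInt e (hS he) f (hS hfS)
      have hcard : ((S.erase e).erase f).card ≤ 2 * k := by
        have h1 : (S.erase e).card = S.card - 1 := Finset.card_erase_of_mem he
        have h2 : ((S.erase e).erase f).card = (S.erase e).card - 1 :=
          Finset.card_erase_of_mem hf
        omega
      have hsub : (S.erase e).erase f ⊆ S :=
        (Finset.erase_subset _ _).trans (Finset.erase_subset _ _)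
      obtain ⟨W, hW1, hW2⟩ := ih ((S.erase e).erase f) (hsub.trans hS) hcard
      refine ⟨insert v W, ?_, ?_⟩
      · have := Finset.card_insert_le v W; omega
      · intro g hg
        by_cases hge : g = e
        · exact ⟨v, Finset.mem_insert_self _ _, hge ▸ hv1⟩
        by_cases hgf : g = f
        · exact ⟨v, Finset.mem_insert_self _ _, hgf ▸ hv2⟩
        · obtain ⟨w, hw1, hw2⟩ :=
            hW2 g (Finset.mem_erase.mpr ⟨hgf, Finset.mem_erase.mpr ⟨hge, hg⟩⟩)
          exact ⟨w, Finset.mem_insert_of_mem hw1, hw2⟩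

theorem stmt7 :
    ¬ ∃ (V : Type) (part : V → Fin 6) (E : Finset (Finset V)),
      Partite 6 part E ∧ Intersecting E ∧ E.card = 12 ∧ coverNum E = 5 := by
  classical
  rintro ⟨V, part, E, hPart, hInt, hE12, hCov⟩
  -- no cover of size ≤ 4
  have hNC : ∀ C : Finset V, IsCover E C → ¬ C.card ≤ 4 := by
    intro C hC hle
    have h5 : coverNum E ≤ C.card := Nat.sInf_le ⟨C, hC, rfl⟩
    rw [hCov] at h5
    omega
  have hEne : E.Nonempty := by rw [← Finset.card_pos, hE12]; omega
  obtain ⟨e0, he0⟩ := hEne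
  obtain ⟨v0, hv0, -⟩ := hInt e0 he0 e0 he0
  -- the unique vertex of part i in each edge
  have hσex : ∀ (i : Fin 6) (e : Finset V), ∃ v, e ∈ E →
      v ∈ e ∧ part v = i ∧ ∀ w ∈ e, part w = i → w = v := by
    intro i e
    by_cases he : e ∈ E
    · obtain ⟨v, hv⟩ := Finset.card_eq_one.mp (hPart e he i)
      refine ⟨v, fun _ => ?_⟩
      have hvmem : v ∈ e.filter (fun v => part v = i) := by rw [hv]; simp
      simp only [Finset.mem_filter] at hvmem
      refine ⟨hvmem.1, hvmem.2, ?_⟩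
      intro w hw hwi
      have hmem : w ∈ e.filter (fun v => part v = i) := Finset.mem_filter.mpr ⟨hw, hwi⟩
      rw [hv] at hmem; simpa using hmem
    · exact ⟨v0, fun h => absurd h he⟩
  choose σ hσ using hσex
  -- blocks
  set blk : V → Finset (Finset V) := fun v => E.filter (fun e => v ∈ e) with hblkdef
  set d : V → ℕ := fun v => (blk v).card with hddef
  have hblkmem : ∀ v e, e ∈ blk v ↔ e ∈ E ∧ v ∈ e := by
    intro v e; simp [hblkdef]
  have hblksub : ∀ v, blk v ⊆ E := fun v => Finset.filter_subset _ _
  have hdcard : ∀ v, (blk v).card = d v := fun v => rfl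
  -- distinct vertices in the same part have disjoint blocks
  have hdisj : ∀ v w, part v = part w → v ≠ w → ∀ e, e ∈ blk v → e ∈ blk w → False := by
    intro v w hp hvw e hev hew
    rw [hblkmem] at hev hew
    have h1 := hPart e hev.1 (part v)
    have h2 : 1 < (e.filter (fun x => part x = part v)).card := by
      apply Finset.one_lt_card.mpr
      refine ⟨v, Finset.mem_filter.mpr ⟨hev.2, rfl⟩, w,
        Finset.mem_filter.mpr ⟨hew.2, hp.symm⟩, hvw⟩
    omega
  -- common vertex of a pair of edges
  have hΦex : ∀ p : Finset (Finset V), ∃ v, p ∈ Finset.powersetCard 2 E →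
      ∀ e ∈ p, v ∈ e := by
    intro p
    by_cases hp : p ∈ Finset.powersetCard 2 E
    · rw [Finset.mem_powersetCard] at hp
      obtain ⟨e, f, hef, rfl⟩ := Finset.card_eq_two.mp hp.2
      have hee : e ∈ E := hp.1 (by simp)
      have hff : f ∈ E := hp.1 (by simp)
      obtain ⟨v, hv1, hv2⟩ := hInt e hee f hff
      refine ⟨v, fun _ g hg => ?_⟩
      rcases Finset.mem_insert.mp hg with rfl | hg
      · exact hv1
      · rw [Finset.mem_singleton.mp hg]; exact hv2
    · exact ⟨v0, fun h => absurd h hp⟩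
  choose Φ hΦ using hΦex
  -- ===== max degree ≤ 4 =====
  have hd4 : ∀ v, d v ≤ 4 := by
    intro A
    by_contra hA
    push_neg at hA
    have hdA5 : 5 ≤ d A := hA
    set S := E \ blk A with hSdef
    have hSsub : S ⊆ E := Finset.sdiff_subset
    have hScard : S.card = 12 - d A := by
      rw [hSdef, Finset.card_sdiff_of_subset (hblksub A), hE12, hdcard]
    have mkcover : ∀ W : Finset V, (∀ e ∈ S, ∃ v ∈ W, v ∈ e) →
        (insert A W).card ≤ 4 → False := by
      intro W hW hcard
      refine hNC (insert A W) ?_ hcard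
      intro e heE
      by_cases hAe : A ∈ e
      · exact ⟨A, Finset.mem_insert_self _ _, hAe⟩
      · have heS : e ∈ S := by
          rw [hSdef, Finset.mem_sdiff]
          exact ⟨heE, fun hmem => hAe ((hblkmem A e).mp hmem).2⟩
        obtain ⟨v, hv1, hv2⟩ := hW e heS
        exact ⟨v, Finset.mem_insert_of_mem hv1, hv2⟩
    by_cases h6 : 6 ≤ d A
    · obtain ⟨W, hW1, hW2⟩ := exCover hInt 3 S hSsub (by omega)
      exact mkcover W hW2 (by have := Finset.card_insert_le A W; omega)
    · have hd5 : d A = 5 := by omega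
      have hS7 : S.card = 7 := by omega
      -- every block meets S in at most 2 edges
      have hb1 : ∀ w, (blk w ∩ S).card ≤ 2 := by
        intro w
        by_contra hw3
        push_neg at hw3
        have hCsub : S \ blk w ⊆ E := Finset.sdiff_subset.trans hSsub
        have hCcard : (S \ blk w).card ≤ 2 * 2 := by
          have h := Finset.card_sdiff_add_card_inter S (blk w)
          rw [Finset.inter_comm] at h
          omega
        obtain ⟨W, hW1, hW2⟩ := exCover hInt 2 (S \ blk w) hCsub hCcard
        refine hNC (insert A (insert w W)) ?_ ?_
        · intro e heE
          by_cases hAe : A ∈ e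
          · exact ⟨A, Finset.mem_insert_self _ _, hAe⟩
          by_cases hwe : w ∈ e
          · exact ⟨w, Finset.mem_insert_of_mem (Finset.mem_insert_self _ _), hwe⟩
          · have heS : e ∈ S := by
              rw [hSdef, Finset.mem_sdiff]
              exact ⟨heE, fun hmem => hAe ((hblkmem A e).mp hmem).2⟩
            have heC : e ∈ S \ blk w := by
              rw [Finset.mem_sdiff]
              exact ⟨heS, fun hmem => hwe ((hblkmem w e).mp hmem).2⟩
            obtain ⟨v, hv1, hv2⟩ := hW2 e heC
            exact ⟨v, Finset.mem_insert_of_mem (Finset.mem_insert_of_mem hv1), hv2⟩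
        · have h1 := Finset.card_insert_le A (insert w W)
          have h2 := Finset.card_insert_le w W
          omega
      -- counting: 21 pairs inside S, at most 3 covered per part
      have hPSsub : Finset.powersetCard 2 S ⊆ Finset.powersetCard 2 E :=
        Finset.powersetCard_mono hSsub
      have hPS21 : (Finset.powersetCard 2 S).card = 21 := by
        rw [Finset.card_powersetCard, hS7]; decide
      have hfib := Finset.card_eq_sum_card_fiberwise
        (f := fun p => part (Φ p)) (s := Finset.powersetCard 2 S) (t := Finset.univ)
        (fun p _ => Finset.mem_univ _)
      have hfb : ∀ i : Fin 6,
          ((Finset.powersetCard 2 S).filter (fun p => part (Φ p) = i)).card ≤ 3 := by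
        intro i
        set F := (Finset.powersetCard 2 S).filter (fun p => part (Φ p) = i) with hFdef
        have hFmem : ∀ p ∈ F, p ⊆ S ∧ p.card = 2 ∧ part (Φ p) = i ∧ ∀ e ∈ p, Φ p ∈ e := by
          intro p hp
          rw [hFdef, Finset.mem_filter] at hp
          obtain ⟨hp1, hp2⟩ := hp
          have hp1' := Finset.mem_powersetCard.mp hp1
          exact ⟨hp1'.1, hp1'.2, hp2, hΦ p (hPSsub hp1)⟩
        have hpd : ∀ p ∈ F, ∀ q ∈ F, p ≠ q → Disjoint p q := by
          intro p hp q hq hne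
          obtain ⟨hpS, hp2, hpi, hpΦ⟩ := hFmem p hp
          obtain ⟨hqS, hq2, hqi, hqΦ⟩ := hFmem q hq
          by_cases hΦeq : Φ p = Φ q
          · exfalso
            have hsub1 : p ⊆ blk (Φ p) ∩ S := by
              intro e hep
              exact Finset.mem_inter.mpr
                ⟨(hblkmem _ _).mpr ⟨hSsub (hpS hep), hpΦ e hep⟩, hpS hep⟩
            have hsub2 : q ⊆ blk (Φ p) ∩ S := by
              intro e heq
              exact Finset.mem_inter.mpr
                ⟨(hblkmem _ _).mpr ⟨hSsub (hqS heq), hΦeq ▸ hqΦ e heq⟩, hqS heq⟩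
            have hble := hb1 (Φ p)
            have h1 : p = blk (Φ p) ∩ S :=
              Finset.eq_of_subset_of_card_le hsub1 (by omega)
            have h2 : q = blk (Φ p) ∩ S :=
              Finset.eq_of_subset_of_card_le hsub2 (by omega)
            exact hne (h1.trans h2.symm)
          · rw [Finset.disjoint_left]
            intro e hep heq
            exact hdisj (Φ p) (Φ q) (hpi.trans hqi.symm) hΦeq e
              ((hblkmem _ _).mpr ⟨hSsub (hpS hep), hpΦ e hep⟩)
              ((hblkmem _ _).mpr ⟨hSsub (hqS heq), hqΦ e heq⟩)
        have hbu : (F.biUnion (fun p => p)).card = 2 * F.card := by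
          rw [Finset.card_biUnion hpd]
          rw [Finset.sum_congr rfl (fun p hp => (hFmem p hp).2.1)]
          simp [Finset.sum_const, Nat.mul_comm]
        have hsubS : F.biUnion (fun p => p) ⊆ S := by
          refine Finset.biUnion_subset.mpr ?_
          intro p hp
          exact (hFmem p hp).1
        have hle := Finset.card_le_card hsubS
        omega
      have hsum_le : ∑ i : Fin 6,
          ((Finset.powersetCard 2 S).filter (fun p => part (Φ p) = i)).card ≤ 18 := by
        calc ∑ i : Fin 6, ((Finset.powersetCard 2 S).filter (fun p => part (Φ p) = i)).card
            ≤ ∑ _i : Fin 6, 3 := Finset.sum_le_sum (fun i _ => hfb i)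
          _ = 18 := by simp
      have hfib' : (21:ℕ) = ∑ i : Fin 6,
          ((Finset.powersetCard 2 S).filter (fun p => part (Φ p) = i)).card := by
        rw [← hPS21]; exact hfib
      omega
  -- ===== part structure =====
  set W : Fin 6 → Finset V := fun i => E.image (fun e => σ i e) with hWdef
  have hWmem1 : ∀ i w, w ∈ W i → 1 ≤ d w ∧ d w ≤ 4 ∧ part w = i := by
    intro i w hw
    rw [hWdef] at hw
    obtain ⟨e, he, rfl⟩ := Finset.mem_image.mp hw
    have h := hσ i e he
    refine ⟨?_, hd4 _, h.2.1⟩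
    have hmem : e ∈ blk (σ i e) := (hblkmem _ _).mpr ⟨he, h.1⟩
    have := Finset.card_pos.mpr ⟨e, hmem⟩
    rw [hdcard] at this
    omega
  have hWcover : ∀ i, ∀ e ∈ E, σ i e ∈ W i := by
    intro i e he
    rw [hWdef]
    exact Finset.mem_image_of_mem _ he
  have hW5 : ∀ i, 5 ≤ (W i).card := by
    intro i
    by_contra h
    refine hNC (W i) ?_ (by omega)
    intro e he
    exact ⟨σ i e, hWcover i e he, (hσ i e he).1⟩
  have hblkfiber : ∀ i w, w ∈ W i → E.filter (fun e => σ i e = w) = blk w := by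
    intro i w hw
    ext e
    simp only [Finset.mem_filter, hblkmem]
    constructor
    · rintro ⟨he, rfl⟩
      exact ⟨he, (hσ i e he).1⟩
    · rintro ⟨he, hwe⟩
      exact ⟨he, ((hσ i e he).2.2 w hwe (hWmem1 i w hw).2.2).symm⟩
  have hsum12 : ∀ i, ∑ w ∈ W i, d w = 12 := by
    intro i
    have h := Finset.card_eq_sum_card_fiberwise
      (f := fun e => σ i e) (s := E) (t := W i) (hWcover i)
    rw [hE12] at h
    have h' : (12:ℕ) = ∑ w ∈ W i, (E.filter (fun e => σ i e = w)).card := h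
    have h2 : ∑ w ∈ W i, d w = ∑ w ∈ W i, (E.filter (fun e => σ i e = w)).card :=
      Finset.sum_congr rfl (fun w hw => by rw [hblkfiber i w hw, hdcard])
    rw [h2]; exact h'.symm
  -- no two disjoint degree-4 blocks
  have hno44 : ∀ v w, d v = 4 → d w = 4 → v ≠ w →
      (∀ e, e ∈ blk v → e ∈ blk w → False) → False := by
    intro v w hv hw hvw hdsj
    have hdd : Disjoint (blk v) (blk w) := by
      rw [Finset.disjoint_left]
      intro e hev hew
      exact hdsj e hev hew
    have hcardU : (blk v ∪ blk w).card = 8 := by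
      rw [Finset.card_union_of_disjoint hdd, hdcard, hdcard, hv, hw]
    have hUsub : blk v ∪ blk w ⊆ E := Finset.union_subset (hblksub v) (hblksub w)
    have hRcard : (E \ (blk v ∪ blk w)).card = 4 := by
      rw [Finset.card_sdiff_of_subset hUsub, hE12, hcardU]
    obtain ⟨W2, hW2c, hW2⟩ := exCover hInt 2 (E \ (blk v ∪ blk w))
      Finset.sdiff_subset (by omega)
    refine hNC (insert v (insert w W2)) ?_ ?_
    · intro e he
      by_cases h1 : v ∈ e
      · exact ⟨v, Finset.mem_insert_self _ _, h1⟩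
      by_cases h2 : w ∈ e
      · exact ⟨w, Finset.mem_insert_of_mem (Finset.mem_insert_self _ _), h2⟩
      · have heR : e ∈ E \ (blk v ∪ blk w) := by
          rw [Finset.mem_sdiff, Finset.mem_union]
          push_neg
          exact ⟨he, fun hm => h1 ((hblkmem v e).mp hm).2,
            fun hm => h2 ((hblkmem w e).mp hm).2⟩
        obtain ⟨x, hx1, hx2⟩ := hW2 e heR
        exact ⟨x, Finset.mem_insert_of_mem (Finset.mem_insert_of_mem hx1), hx2⟩
    · have h1 := Finset.card_insert_le v (insert w W2)
      have h2 := Finset.card_insert_le w W2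
      omega
  -- ===== shape analysis per part =====
  have hshape : ∀ i : Fin 6, (∑ w ∈ W i, (d w).choose 2) ≤ 11 ∧
      ((∑ w ∈ W i, (d w).choose 2) = 11 →
        ((W i).filter (fun w => d w = 4)).card = 1) := by
    intro i
    set a := ((W i).filter (fun w => d w = 4)).card with hadef
    set b := ((W i).filter (fun w => d w = 3)).card with hbdef
    set c := ((W i).filter (fun w => d w = 2)).card with hcdef
    set e1 := ((W i).filter (fun w => d w = 1)).card with he1def
    have expand : ∀ F : ℕ → ℕ,
        ∑ y ∈ ({1, 2, 3, 4} : Finset ℕ), F y = F 1 + F 2 + F 3 + F 4 := by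
      intro F
      show ∑ y ∈ insert 1 (insert 2 (insert 3 ({4} : Finset ℕ))), F y = _
      rw [Finset.sum_insert (by decide), Finset.sum_insert (by decide),
        Finset.sum_insert (by decide), Finset.sum_singleton]
      ring
    have key : ∀ g : ℕ → ℕ, ∑ w ∈ W i, g (d w) =
        g 4 * a + g 3 * b + g 2 * c + g 1 * e1 := by
      intro g
      have hmaps : ∀ w ∈ W i, d w ∈ ({1, 2, 3, 4} : Finset ℕ) := by
        intro w hw
        have h := hWmem1 i w hw
        simp only [Finset.mem_insert, Finset.mem_singleton]
        omega
      have h := Finset.sum_fiberwise_of_maps_to hmaps (fun w => g (d w))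
      rw [← h]
      have hconst : ∀ k : ℕ, ∑ w ∈ (W i).filter (fun w => d w = k), g (d w)
          = g k * ((W i).filter (fun w => d w = k)).card := by
        intro k
        rw [Finset.sum_congr rfl (fun w hw => by rw [(Finset.mem_filter.mp hw).2])]
        rw [Finset.sum_const, smul_eq_mul, Nat.mul_comm]
      rw [expand (fun y => ∑ w ∈ (W i).filter (fun w => d w = y), g (d w))]
      rw [hconst 1, hconst 2, hconst 3, hconst 4]
      ring
    have hcardsum : (W i).card = a + b + c + e1 := by
      have h : (W i).card = 1 * a + 1 * b + 1 * c + 1 * e1 := by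
        rw [← key (fun _ => 1)]
        simp
      omega
    have h1 : 4 * a + 3 * b + 2 * c + 1 * e1 = 12 := by
      rw [← hsum12 i]
      exact (key (fun n => n)).symm
    have h2 : (∑ w ∈ W i, (d w).choose 2) = 6 * a + 3 * b + 1 * c + 0 * e1 := by
      have h : (∑ w ∈ W i, (d w).choose 2) =
          Nat.choose 4 2 * a + Nat.choose 3 2 * b + Nat.choose 2 2 * c
            + Nat.choose 1 2 * e1 := key (fun n => n.choose 2)
      rw [h, show Nat.choose 4 2 = 6 from by decide, show Nat.choose 3 2 = 3 from by decide,
        show Nat.choose 2 2 = 1 from by decide, show Nat.choose 1 2 = 0 from by decide]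
    have h3 : 5 ≤ a + b + c + e1 := hcardsum ▸ hW5 i
    have h4 : a ≤ 1 := by
      by_contra h
      push_neg at h
      obtain ⟨v, hv, w, hw, hvw⟩ := Finset.one_lt_card.mp h
      have hv' := Finset.mem_filter.mp hv
      have hw' := Finset.mem_filter.mp hw
      refine hno44 v w hv'.2 hw'.2 hvw ?_
      intro e hev hew
      refine hdisj v w ?_ hvw e hev hew
      rw [(hWmem1 i v hv'.1).2.2, (hWmem1 i w hw'.1).2.2]
    have h5 : ¬(a = 1 ∧ b = 2 ∧ c = 0 ∧ e1 = 2) := by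
      rintro ⟨ha, hb, hc, he1'⟩
      obtain ⟨A0, hA0⟩ := Finset.card_eq_one.mp ha
      obtain ⟨C1, C2, hC12, hCC⟩ := Finset.card_eq_two.mp hb
      obtain ⟨u1, u2, hu12, huu⟩ := Finset.card_eq_two.mp he1'
      have hu1m : u1 ∈ W i ∧ d u1 = 1 := by
        have : u1 ∈ (W i).filter (fun w => d w = 1) := by rw [huu]; simp
        exact Finset.mem_filter.mp this
      have hu2m : u2 ∈ W i ∧ d u2 = 1 := by
        have : u2 ∈ (W i).filter (fun w => d w = 1) := by rw [huu]; simp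
        exact Finset.mem_filter.mp this
      obtain ⟨s1, hs1⟩ := Finset.card_eq_one.mp
        (show (blk u1).card = 1 by rw [hdcard]; exact hu1m.2)
      obtain ⟨s2, hs2⟩ := Finset.card_eq_one.mp
        (show (blk u2).card = 1 by rw [hdcard]; exact hu2m.2)
      have hs1E : s1 ∈ E := hblksub u1 (by rw [hs1]; simp)
      have hs2E : s2 ∈ E := hblksub u2 (by rw [hs2]; simp)
      have hs12 : s1 ≠ s2 := by
        intro h
        refine hdisj u1 u2 ?_ hu12 s1 (by rw [hs1]; simp) (by rw [hs2, ← h]; simp)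
        rw [(hWmem1 i u1 hu1m.1).2.2, (hWmem1 i u2 hu2m.1).2.2]
      obtain ⟨x, hx1, hx2⟩ := hInt s1 hs1E s2 hs2E
      refine hNC (insert A0 (insert C1 (insert C2 ({x} : Finset V)))) ?_ ?_
      · intro e he
        have hσW := hWcover i e he
        have hσe := (hσ i e he).1
        have hdm := hWmem1 i (σ i e) hσW
        have hne2 : d (σ i e) ≠ 2 := by
          intro h2
          have hmm : σ i e ∈ (W i).filter (fun w => d w = 2) :=
            Finset.mem_filter.mpr ⟨hσW, h2⟩
          rw [Finset.card_eq_zero.mp hc] at hmm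
          simp at hmm
        have hd14 : d (σ i e) = 1 ∨ d (σ i e) = 3 ∨ d (σ i e) = 4 := by omega
        rcases hd14 with hh | hh | hh
        · have hmem : σ i e ∈ ({u1, u2} : Finset V) := by
            rw [← huu]; exact Finset.mem_filter.mpr ⟨hσW, hh⟩
          have hee : e ∈ blk (σ i e) := (hblkmem _ _).mpr ⟨he, hσe⟩
          rcases Finset.mem_insert.mp hmem with h | h
          · rw [h, hs1] at hee
            rw [Finset.mem_singleton.mp hee]
            exact ⟨x, by simp, hx1⟩
          · rw [Finset.mem_singleton.mp h, hs2] at hee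
            rw [Finset.mem_singleton.mp hee]
            exact ⟨x, by simp, hx2⟩
        · have hmem : σ i e ∈ ({C1, C2} : Finset V) := by
            rw [← hCC]; exact Finset.mem_filter.mpr ⟨hσW, hh⟩
          rcases Finset.mem_insert.mp hmem with h | h
          · exact ⟨C1, by simp, h ▸ hσe⟩
          · exact ⟨C2, by simp, (Finset.mem_singleton.mp h) ▸ hσe⟩
        · have hmem : σ i e ∈ ({A0} : Finset V) := by
            rw [← hA0]; exact Finset.mem_filter.mpr ⟨hσW, hh⟩
          exact ⟨A0, by simp, (Finset.mem_singleton.mp hmem) ▸ hσe⟩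
      · have hc1 := Finset.card_insert_le A0 (insert C1 (insert C2 ({x} : Finset V)))
        have hc2 := Finset.card_insert_le C1 (insert C2 ({x} : Finset V))
        have hc3 := Finset.card_insert_le C2 ({x} : Finset V)
        have hc4 : ({x} : Finset V).card = 1 := Finset.card_singleton x
        omega
    rw [h2]
    omega
  -- ===== global pair counting =====
  have hPE66 : (Finset.powersetCard 2 E).card = 66 := by
    rw [Finset.card_powersetCard, hE12]; decide
  have hΦW : ∀ i : Fin 6, ∀ p ∈ Finset.powersetCard 2 E, part (Φ p) = i →
      Φ p ∈ W i ∧ p ⊆ blk (Φ p) := by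
    intro i p hp hpi
    have hp' := Finset.mem_powersetCard.mp hp
    obtain ⟨e, hep⟩ := Finset.card_pos.mp (by rw [hp'.2]; omega)
    have hΦe := hΦ p hp
    have heq : Φ p = σ i e := (hσ i e (hp'.1 hep)).2.2 (Φ p) (hΦe e hep) hpi
    constructor
    · rw [heq]; exact hWcover i e (hp'.1 hep)
    · intro f hf
      exact (hblkmem _ _).mpr ⟨hp'.1 hf, hΦe f hf⟩
  have hfibsum : ∀ i : Fin 6,
      ((Finset.powersetCard 2 E).filter (fun p => part (Φ p) = i)).card =
        ∑ w ∈ W i, (((Finset.powersetCard 2 E).filter (fun p => part (Φ p) = i)).filter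
          (fun p => Φ p = w)).card := by
    intro i
    exact Finset.card_eq_sum_card_fiberwise
      (fun p hp => (hΦW i p (Finset.mem_filter.mp hp).1 (Finset.mem_filter.mp hp).2).1)
  have hsf_sub : ∀ i : Fin 6, ∀ w ∈ W i,
      (((Finset.powersetCard 2 E).filter (fun p => part (Φ p) = i)).filter
        (fun p => Φ p = w)) ⊆ Finset.powersetCard 2 (blk w) := by
    intro i w hw p hp
    have hp1 := Finset.mem_filter.mp hp
    have hp2 := Finset.mem_filter.mp hp1.1
    have hp3 := Finset.mem_powersetCard.mp hp2.1
    rw [Finset.mem_powersetCard]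
    exact ⟨hp1.2 ▸ (hΦW i p hp2.1 hp2.2).2, hp3.2⟩
  have hsf_le : ∀ i : Fin 6, ∀ w ∈ W i,
      (((Finset.powersetCard 2 E).filter (fun p => part (Φ p) = i)).filter
        (fun p => Φ p = w)).card ≤ (d w).choose 2 := by
    intro i w hw
    calc (((Finset.powersetCard 2 E).filter (fun p => part (Φ p) = i)).filter
        (fun p => Φ p = w)).card
        ≤ (Finset.powersetCard 2 (blk w)).card := Finset.card_le_card (hsf_sub i w hw)
      _ = (d w).choose 2 := by rw [Finset.card_powersetCard, hdcard]
  have hfib_le : ∀ i : Fin 6,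
      ((Finset.powersetCard 2 E).filter (fun p => part (Φ p) = i)).card ≤ 11 := by
    intro i
    calc ((Finset.powersetCard 2 E).filter (fun p => part (Φ p) = i)).card
        = ∑ w ∈ W i, (((Finset.powersetCard 2 E).filter (fun p => part (Φ p) = i)).filter
            (fun p => Φ p = w)).card := hfibsum i
      _ ≤ ∑ w ∈ W i, (d w).choose 2 := Finset.sum_le_sum (fun w hw => hsf_le i w hw)
      _ ≤ 11 := (hshape i).1
  have h66 : (66 : ℕ) = ∑ i : Fin 6,
      ((Finset.powersetCard 2 E).filter (fun p => part (Φ p) = i)).card := by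
    rw [← hPE66]
    exact Finset.card_eq_sum_card_fiberwise (fun p _ => Finset.mem_univ _)
  have hall11 : ∀ i : Fin 6,
      ((Finset.powersetCard 2 E).filter (fun p => part (Φ p) = i)).card = 11 := by
    by_contra hcon
    push_neg at hcon
    obtain ⟨i0, hi0⟩ := hcon
    have hlt : ((Finset.powersetCard 2 E).filter (fun p => part (Φ p) = i0)).card < 11 :=
      lt_of_le_of_ne (hfib_le i0) hi0
    have hstrict : ∑ i : Fin 6,
        ((Finset.powersetCard 2 E).filter (fun p => part (Φ p) = i)).card
          < ∑ _i : Fin 6, 11 :=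
      Finset.sum_lt_sum (fun i _ => hfib_le i) ⟨i0, Finset.mem_univ _, hlt⟩
    have : ∑ _i : Fin 6, (11:ℕ) = 66 := by simp
    omega
  have hP11 : ∀ i : Fin 6, ∑ w ∈ W i, (d w).choose 2 = 11 := by
    intro i
    refine le_antisymm (hshape i).1 ?_
    calc (11:ℕ) = ((Finset.powersetCard 2 E).filter (fun p => part (Φ p) = i)).card :=
          (hall11 i).symm
      _ = ∑ w ∈ W i, (((Finset.powersetCard 2 E).filter (fun p => part (Φ p) = i)).filter
            (fun p => Φ p = w)).card := hfibsum i
      _ ≤ ∑ w ∈ W i, (d w).choose 2 := Finset.sum_le_sum (fun w hw => hsf_le i w hw)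
  -- tightness: every 2-subset of a block maps to that block's vertex
  have htight : ∀ i : Fin 6, ∀ w ∈ W i, ∀ p : Finset (Finset V),
      p ⊆ blk w → p.card = 2 → Φ p = w := by
    intro i w hw p hpsub hp2
    have hsum_eq : ∑ w' ∈ W i, (((Finset.powersetCard 2 E).filter
        (fun p => part (Φ p) = i)).filter (fun p => Φ p = w')).card
          = ∑ w' ∈ W i, (d w').choose 2 := by
      rw [← hfibsum i, hall11 i, hP11 i]
    have heach := (Finset.sum_eq_sum_iff_of_le (fun w' hw' => hsf_le i w' hw')).mp hsum_eq
    have hcardeq := heach w hw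
    have hseteq : (((Finset.powersetCard 2 E).filter (fun p => part (Φ p) = i)).filter
        (fun p => Φ p = w)) = Finset.powersetCard 2 (blk w) := by
      refine Finset.eq_of_subset_of_card_le (hsf_sub i w hw) ?_
      rw [hcardeq, Finset.card_powersetCard, hdcard]
    have hpm : p ∈ Finset.powersetCard 2 (blk w) := Finset.mem_powersetCard.mpr ⟨hpsub, hp2⟩
    rw [← hseteq] at hpm
    exact (Finset.mem_filter.mp hpm).2
  -- ===== the six degree-4 vertices =====
  have hA4ex : ∀ i : Fin 6, ∃ A0, (W i).filter (fun w => d w = 4) = {A0} := by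
    intro i
    exact Finset.card_eq_one.mp ((hshape i).2 (hP11 i))
  choose A hA using hA4ex
  have hAm : ∀ i, A i ∈ W i ∧ d (A i) = 4 := by
    intro i
    have : A i ∈ (W i).filter (fun w => d w = 4) := by rw [hA i]; simp
    exact Finset.mem_filter.mp this
  have hApart : ∀ i, part (A i) = i := fun i => (hWmem1 i (A i) (hAm i).1).2.2
  have hAne : ∀ i j : Fin 6, i ≠ j → A i ≠ A j := by
    intro i j hij h
    exact hij (by rw [← hApart i, h, hApart j])
  have hcap1 : ∀ i j : Fin 6, i ≠ j → ∃ e, blk (A i) ∩ blk (A j) = {e} := by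
    intro i j hij
    have hne : (blk (A i) ∩ blk (A j)).Nonempty := by
      rcases Finset.eq_empty_or_nonempty (blk (A i) ∩ blk (A j)) with hemp | hne
      · exfalso
        refine hno44 (A i) (A j) (hAm i).2 (hAm j).2 (hAne i j hij) ?_
        intro e he1 he2
        have hmm : e ∈ blk (A i) ∩ blk (A j) := Finset.mem_inter.mpr ⟨he1, he2⟩
        rw [hemp] at hmm; simp at hmm
      · exact hne
    have hle1 : (blk (A i) ∩ blk (A j)).card ≤ 1 := by
      by_contra hgt
      push_neg at hgt
      obtain ⟨e, he, f, hf, hef⟩ := Finset.one_lt_card.mp hgt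
      have hcard2 : ({e, f} : Finset (Finset V)).card = 2 := Finset.card_pair hef
      have hsubi : ({e, f} : Finset (Finset V)) ⊆ blk (A i) := by
        intro g hg
        rcases Finset.mem_insert.mp hg with rfl | hg
        · exact (Finset.mem_inter.mp he).1
        · rw [Finset.mem_singleton.mp hg]; exact (Finset.mem_inter.mp hf).1
      have hsubj : ({e, f} : Finset (Finset V)) ⊆ blk (A j) := by
        intro g hg
        rcases Finset.mem_insert.mp hg with rfl | hg
        · exact (Finset.mem_inter.mp he).2
        · rw [Finset.mem_singleton.mp hg]; exact (Finset.mem_inter.mp hf).2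
      have h1 := htight i (A i) (hAm i).1 {e, f} hsubi hcard2
      have h2 := htight j (A j) (hAm j).1 {e, f} hsubj hcard2
      exact hAne i j hij (h1.symm.trans h2)
    obtain ⟨e, he⟩ := Finset.card_eq_one.mp (le_antisymm hle1 (Finset.card_pos.mpr hne))
    exact ⟨e, he⟩
  -- no edge lies in three of the big blocks
  have hG4 : ∀ i j k : Fin 6, i ≠ j → i ≠ k → j ≠ k → ∀ e,
      e ∈ blk (A i) → e ∈ blk (A j) → e ∈ blk (A k) → False := by
    intro i j k hij hik hjk e he1 he2 he3
    have hsing : ∀ x y : Fin 6, x ≠ y → e ∈ blk (A x) → e ∈ blk (A y) →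
        blk (A x) ∩ blk (A y) = {e} := by
      intro x y hxy hex hey
      obtain ⟨f, hfeq⟩ := hcap1 x y hxy
      have hmm : e ∈ ({f} : Finset (Finset V)) := hfeq ▸ Finset.mem_inter.mpr ⟨hex, hey⟩
      rw [Finset.mem_singleton] at hmm
      rw [hfeq, hmm]
    have h12 := hsing i j hij he1 he2
    have h13 := hsing i k hik he1 he3
    have h23 := hsing j k hjk he2 he3
    have c12 : (blk (A i) ∪ blk (A j)).card = 7 := by
      have h := Finset.card_union_add_card_inter (blk (A i)) (blk (A j))
      rw [h12, hdcard, hdcard, (hAm i).2, (hAm j).2, Finset.card_singleton] at h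
      omega
    have hint2 : (blk (A i) ∪ blk (A j)) ∩ blk (A k) = {e} := by
      ext f
      simp only [Finset.mem_inter, Finset.mem_union, Finset.mem_singleton]
      constructor
      · rintro ⟨hf1 | hf1, hf2⟩
        · have hmm : f ∈ blk (A i) ∩ blk (A k) := Finset.mem_inter.mpr ⟨hf1, hf2⟩
          rw [h13] at hmm; exact Finset.mem_singleton.mp hmm
        · have hmm : f ∈ blk (A j) ∩ blk (A k) := Finset.mem_inter.mpr ⟨hf1, hf2⟩
          rw [h23] at hmm; exact Finset.mem_singleton.mp hmm
      · rintro rfl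
        exact ⟨Or.inl he1, he3⟩
    have cU : (blk (A i) ∪ blk (A j) ∪ blk (A k)).card = 10 := by
      have h := Finset.card_union_add_card_inter (blk (A i) ∪ blk (A j)) (blk (A k))
      rw [hint2, Finset.card_singleton, c12, hdcard, (hAm k).2] at h
      omega
    have hUsub : blk (A i) ∪ blk (A j) ∪ blk (A k) ⊆ E :=
      Finset.union_subset (Finset.union_subset (hblksub _) (hblksub _)) (hblksub _)
    have hRcard : (E \ (blk (A i) ∪ blk (A j) ∪ blk (A k))).card = 2 := by
      rw [Finset.card_sdiff_of_subset hUsub, hE12, cU]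
    obtain ⟨W2, hW2c, hW2⟩ := exCover hInt 1 (E \ (blk (A i) ∪ blk (A j) ∪ blk (A k)))
      Finset.sdiff_subset (by omega)
    refine hNC (insert (A i) (insert (A j) (insert (A k) W2))) ?_ ?_
    · intro f hf
      by_cases hfi : A i ∈ f
      · exact ⟨A i, by simp, hfi⟩
      by_cases hfj : A j ∈ f
      · exact ⟨A j, by simp, hfj⟩
      by_cases hfk : A k ∈ f
      · exact ⟨A k, by simp, hfk⟩
      · have hfR : f ∈ E \ (blk (A i) ∪ blk (A j) ∪ blk (A k)) := by
          rw [Finset.mem_sdiff]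
          refine ⟨hf, ?_⟩
          intro hmem
          rcases Finset.mem_union.mp hmem with hm | hm
          · rcases Finset.mem_union.mp hm with hm' | hm'
            · exact hfi ((hblkmem _ _).mp hm').2
            · exact hfj ((hblkmem _ _).mp hm').2
          · exact hfk ((hblkmem _ _).mp hm).2
        obtain ⟨x, hx1, hx2⟩ := hW2 f hfR
        exact ⟨x, by simp [hx1], hx2⟩
    · have hc1 := Finset.card_insert_le (A i) (insert (A j) (insert (A k) W2))
      have hc2 := Finset.card_insert_le (A j) (insert (A k) W2)
      have hc3 := Finset.card_insert_le (A k) W2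
      omega
  -- ===== final counting: 15 pairs of parts, 12 edges =====
  have hψex : ∀ q : Fin 6 × Fin 6, ∃ e, q.1 < q.2 →
      e ∈ blk (A q.1) ∧ e ∈ blk (A q.2) := by
    intro q
    by_cases h : q.1 < q.2
    · obtain ⟨e, he⟩ := hcap1 q.1 q.2 (ne_of_lt h)
      refine ⟨e, fun _ => ?_⟩
      have hmm : e ∈ blk (A q.1) ∩ blk (A q.2) := by rw [he]; simp
      exact ⟨(Finset.mem_inter.mp hmm).1, (Finset.mem_inter.mp hmm).2⟩
    · exact ⟨e0, fun hc => absurd hc h⟩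
  choose ψ hψ using hψex
  have hKcard : ((Finset.univ : Finset (Fin 6 × Fin 6)).filter (fun q => q.1 < q.2)).card
      = 15 := by decide
  have hmaps : ∀ q ∈ (Finset.univ : Finset (Fin 6 × Fin 6)).filter (fun q => q.1 < q.2),
      ψ q ∈ E := by
    intro q hq
    exact hblksub _ ((hψ q (Finset.mem_filter.mp hq).2).1)
  have hinj : Set.InjOn ψ
      ((Finset.univ : Finset (Fin 6 × Fin 6)).filter (fun q => q.1 < q.2)) := by
    intro q1 hq1 q2 hq2 heq
    by_contra hne
    have hlt1 : q1.1 < q1.2 := (Finset.mem_filter.mp (Finset.mem_coe.mp hq1)).2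
    have hlt2 : q2.1 < q2.2 := (Finset.mem_filter.mp (Finset.mem_coe.mp hq2)).2
    obtain ⟨ha1, ha2⟩ := hψ q1 hlt1
    obtain ⟨hb1, hb2⟩ := hψ q2 hlt2
    rw [heq] at ha1 ha2
    by_cases h11 : q1.1 = q2.1
    · have h22 : q1.2 ≠ q2.2 := by
        intro h
        exact hne (Prod.ext_iff.mpr ⟨h11, h⟩)
      exact hG4 q1.1 q1.2 q2.2 (ne_of_lt hlt1) (h11 ▸ ne_of_lt hlt2) h22 (ψ q2) ha1 ha2 hb2
    · by_cases h12 : q1.2 = q2.1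
      · refine hG4 q1.1 q2.1 q2.2 h11 ?_ (ne_of_lt hlt2) (ψ q2) ha1 hb1 hb2
        exact ne_of_lt (lt_trans (h12 ▸ hlt1) hlt2)
      · exact hG4 q1.1 q1.2 q2.1 (ne_of_lt hlt1) h11 h12 (ψ q2) ha1 ha2 hb1
  have hfinal := Finset.card_le_card_of_injOn ψ hmaps hinj
  rw [hKcard, hE12] at hfinal
  omega
end

section
/- The explicit 6-partite intersecting hypergraph H with the 13 edges E_1,…,E_13 (as specified) has covering number exactly 5: no set of 4 vertices meets all 13 edges, while the 5 vertices of part 2 form a cover. -/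
def E1 : Finset (ℕ × ℕ) := {(1,1), (2,4), (3,4), (4,5), (5,3), (6,5)}

def E2 : Finset (ℕ × ℕ) := {(1,2), (2,5), (3,2), (4,5), (5,5), (6,3)}

def E3 : Finset (ℕ × ℕ) := {(1,3), (2,4), (3,5), (4,3), (5,4), (6,3)}

def E4 : Finset (ℕ × ℕ) := {(1,4), (2,1), (3,5), (4,4), (5,5), (6,5)}

def E5 : Finset (ℕ × ℕ) := {(1,4), (2,5), (3,4), (4,2), (5,4), (6,4)}

def E6 : Finset (ℕ × ℕ) := {(1,5), (2,2), (3,5), (4,5), (5,1), (6,4)}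

def E7 : Finset (ℕ × ℕ) := {(1,5), (2,5), (3,1), (4,3), (5,2), (6,5)}

def E8 : Finset (ℕ × ℕ) := {(1,5), (2,4), (3,3), (4,2), (5,5), (6,2)}

def E9 : Finset (ℕ × ℕ) := {(1,5), (2,3), (3,4), (4,4), (5,3), (6,3)}

def E10 : Finset (ℕ × ℕ) := {(1,6), (2,2), (3,4), (4,3), (5,5), (6,1)}

def E11 : Finset (ℕ × ℕ) := {(1,6), (2,4), (3,2), (4,4), (5,2), (6,4)}

def E12 : Finset (ℕ × ℕ) := {(1,6), (2,5), (3,5), (4,1), (5,3), (6,2)}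

def E13 : Finset (ℕ × ℕ) := {(1,6), (2,3), (3,3), (4,5), (5,4), (6,5)}

def ryserH6 : Finset (Finset (ℕ × ℕ)) := {E1, E2, E3, E4, E5, E6, E7, E8, E9, E10, E11, E12, E13}

section Cover

variable {V : Type*}

lemma IsCover.mono {E E' : Finset (Finset V)} {C : Finset V} (hC : IsCover E C) (h : E' ⊆ E) :
    IsCover E' C :=
  fun e he => hC e (h he)

variable [DecidableEq V]

lemma IsCover.erase {E : Finset (Finset V)} {C : Finset V} (hC : IsCover E C) (v : V) :
    IsCover (E.filter (v ∉ ·)) (C.erase v) := by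
  intro e he
  rw [Finset.mem_filter] at he
  obtain ⟨w, hwC, hwe⟩ := hC e he.1
  exact ⟨w, Finset.mem_erase.2 ⟨fun hwv => he.2 (hwv ▸ hwe), hwC⟩, hwe⟩

/- A cover contains a vertex of the first edge, and without it must still cover the edges that
vertex misses; so branching over that vertex, with the budget lowered by one, loses no cover. -/
def canHit : ℕ → List (Finset V) → Bool
  | _, [] => true
  | 0, _ :: _ => false
  | k + 1, e :: L => decide (∃ v ∈ e, canHit k (L.filter (v ∉ ·)) = true)

lemma canHit_eq_true_of_isCover (k : ℕ) (L : List (Finset V)) (C : Finset V)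
    (hC : IsCover L.toFinset C) (hk : C.card ≤ k) : canHit k L = true := by
  induction k generalizing L C with
  | zero =>
    cases L with
    | nil => rfl
    | cons e L =>
      obtain ⟨v, hvC, -⟩ := hC e (by simp)
      exact absurd (Finset.card_pos.2 ⟨v, hvC⟩) (by omega)
  | succ k ih =>
    cases L with
    | nil => rfl
    | cons e L =>
      obtain ⟨v, hvC, hve⟩ := hC e (by simp)
      have hrest : IsCover (L.filter (v ∉ ·)).toFinset (C.erase v) := by
        refine (hC.erase v).mono ?_
        simpa [List.toFinset_filter] using
          Finset.filter_subset_filter _ (Finset.subset_insert e L.toFinset)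
      have hcard : (C.erase v).card ≤ k := by
        rw [Finset.card_erase_of_mem hvC]
        omega
      exact decide_eq_true ⟨v, hve, ih _ _ hrest hcard⟩

end Cover

lemma ryserH6_eq_toFinset :
    ryserH6 = [E1, E2, E3, E4, E5, E6, E7, E8, E9, E10, E11, E12, E13].toFinset := by
  simp [ryserH6]

theorem stmt10 :
    (∀ C : Finset (ℕ × ℕ), C.card ≤ 4 → ¬ IsCover ryserH6 C) ∧
    IsCover ryserH6 {(2,1), (2,2), (2,3), (2,4), (2,5)} := by
  refine ⟨fun C hC hcov => ?_, by unfold IsCover; decide⟩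
  rw [ryserH6_eq_toFinset] at hcov
  have hsearch : canHit 4 [E1, E2, E3, E4, E5, E6, E7, E8, E9, E10, E11, E12, E13] = false := by
    decide
  simp [canHit_eq_true_of_isCover 4 _ C hcov hC] at hsearch
end
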